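/- Let P be a naturally labeled partial order on {1,2,…,m}. Then for every integer 1 ≤ k ≤ m, the coefficient of x^k in F_P(q,x) is a nonzero polynomial in q whose largest exponent with nonzero coefficient is m(m−1)/2 + k; that is, q_max([x^k]F_P(q,x)) = m(m−1)/2 + k. -/

import Mathlib

open Finset Polynomial LaurentPolynomial

attribute [local instance] Classical.propDecidable

/-- The value `π_i` of the word of `π` at the 1-based position `i` (values in `{1, …, m}`). -/
def wordAt (m : ℕ) (π : Equiv.Perm (Fin m)) (i : ℕ) : ℕ :=
  if h : i - 1 < m then ((π ⟨i - 1, h⟩ : Fin m) : ℕ) + 1 else 0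

/-- The descent set `Des(π) ⊆ {1, …, m-1}` (1-based positions). -/
def DesSet (m : ℕ) (π : Equiv.Perm (Fin m)) : Finset ℕ :=
  (Finset.Ico 1 m).filter fun i => wordAt m π (i + 1) < wordAt m π i

/-- The number of descents `des(π)`. -/
def desNum (m : ℕ) (π : Equiv.Perm (Fin m)) : ℕ := (DesSet m π).card

/-- The major index `maj(π)`. -/
def majIdx (m : ℕ) (π : Equiv.Perm (Fin m)) : ℕ := ∑ i ∈ DesSet m π, i

/-- The partial order `P` on `{1,…,m}` (encoded as `Fin m`) is naturally labeled:
`x ≤_P y` implies `x ≤ y` as integers. -/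
def NatLabeled (m : ℕ) (P : PartialOrder (Fin m)) : Prop :=
  ∀ x y : Fin m, P.le x y → x ≤ y

/-- `π` is a linear extension of `P`: `π_i ≤_P π_j` implies `i ≤ j`. -/
def IsLinExt (m : ℕ) (P : PartialOrder (Fin m)) (π : Equiv.Perm (Fin m)) : Prop :=
  ∀ i j : Fin m, P.le (π i) (π j) → i ≤ j

/-- `mc(x)`: the maximum number of elements of a chain of `P` whose largest element is `x`. -/
noncomputable def mc (m : ℕ) (P : PartialOrder (Fin m)) (x : Fin m) : ℕ :=
  sSup {k : ℕ | ∃ s : Finset (Fin m),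
    s.card = k ∧ IsChain P.le ↑s ∧ x ∈ s ∧ ∀ y ∈ s, P.le y x}

/-- `m̄c(x)`: the maximum number of elements of a chain of `P` whose smallest element is `x`. -/
noncomputable def mcUp (m : ℕ) (P : PartialOrder (Fin m)) (x : Fin m) : ℕ :=
  sSup {k : ℕ | ∃ s : Finset (Fin m),
    s.card = k ∧ IsChain P.le ↑s ∧ x ∈ s ∧ ∀ y ∈ s, P.le x y}

/-- The `q`-integer `[n]_q` for `n ∈ ℤ`, as a Laurent polynomial:
`[n]_q = 1 + q + ⋯ + q^{n-1}` for `n ≥ 0` and `[-n]_q = -q^{-n} [n]_q`. -/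
noncomputable def qInt (n : ℤ) : LaurentPolynomial ℤ :=
  if 0 ≤ n then ∑ i ∈ Finset.range n.toNat, T (i : ℤ)
  else -(T n * ∑ i ∈ Finset.range (-n).toNat, T (i : ℤ))

/-- The polynomial `F_P(q,x) = Σ_{π ∈ L(P)} q^{maj π} Π_{i=1}^m ([i - des π]_q + q^{i - des π} x)`,
an element of `(ℤ[q,q⁻¹])[x]` (it in fact lies in `ℤ[q,x]`). -/
noncomputable def Fpoly (m : ℕ) (P : PartialOrder (Fin m)) : Polynomial (LaurentPolynomial ℤ) :=
  ∑ π ∈ Finset.univ.filter (fun π => IsLinExt m P π),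
    Polynomial.C (T (majIdx m π : ℤ)) *
      ∏ i ∈ Finset.Icc 1 m,
        (Polynomial.C (qInt ((i : ℤ) - desNum m π)) +
          Polynomial.C (T ((i : ℤ) - desNum m π)) * Polynomial.X)

/-- The Newton polygon of an element of `(ℤ[q,q⁻¹])[x]`, in the `(q,x)`-plane. -/
noncomputable def NTL (f : Polynomial (LaurentPolynomial ℤ)) : Set (ℝ × ℝ) :=
  convexHull ℝ {p : ℝ × ℝ | ∃ (i : ℤ) (k : ℕ), (f.coeff k).coeff i ≠ 0 ∧ p = ((i : ℝ), (k : ℝ))}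

/-- The Newton polygon of an element of `ℤ[q][x]`, in the `(q,x)`-plane. -/
noncomputable def NTP (f : Polynomial (Polynomial ℤ)) : Set (ℝ × ℝ) :=
  convexHull ℝ {p : ℝ × ℝ | ∃ (i k : ℕ), (f.coeff k).coeff i ≠ 0 ∧ p = ((i : ℝ), (k : ℝ))}

/-- The polygon `C(a_1,…,a_m;h)`: the convex hull of `(0,0)`, `(a_1+⋯+a_i, i)` for
`1 ≤ i ≤ m`, `(h,m)` and `(h-m,0)`. -/
noncomputable def Cpolygon (m : ℕ) (a : ℕ → ℕ) (h : ℕ) : Set (ℝ × ℝ) :=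
  convexHull ℝ ({((0 : ℝ), (0 : ℝ)), ((h : ℝ), (m : ℝ)), ((h : ℝ) - (m : ℝ), (0 : ℝ))} ∪
    {p : ℝ × ℝ | ∃ i ∈ Finset.Icc 1 m, p = ((∑ j ∈ Finset.Icc 1 i, (a j : ℝ)), (i : ℝ))})

/-- The index of the descent block of `π` containing the 1-based position `j`. -/
def blockIdx (m : ℕ) (π : Equiv.Perm (Fin m)) (j : ℕ) : ℕ :=
  1 + ((Finset.Ico 1 j).filter (fun i => i ∉ DesSet m π)).card

/-- `DB_i(π)`: the set of entries of the `i`-th descent block of `π`. -/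
def DB (m : ℕ) (π : Equiv.Perm (Fin m)) (i : ℕ) : Finset (Fin m) :=
  Finset.univ.filter fun x => blockIdx m π (((π.symm x : Fin m) : ℕ) + 1) = i

/-- `PP(P,n)`: the set of `P`-partitions (order-reversing maps) with all parts at most `n`,
encoded as functions `Fin m → Fin (n+1)`. -/
noncomputable def PPset (m : ℕ) (P : PartialOrder (Fin m)) (n : ℕ) :
    Finset (Fin m → Fin (n + 1)) :=
  Finset.univ.filter fun σ => ∀ x y : Fin m, P.le x y → σ y ≤ σ x

/-- `|σ| = σ(1) + ⋯ + σ(m)`. -/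
def sizePP (m n : ℕ) (σ : Fin m → Fin (n + 1)) : ℕ := ∑ i : Fin m, (σ i : ℕ)

/-- The `q`-integer `[n]_q` for `n ∈ ℕ`, as an ordinary polynomial in `q`. -/
noncomputable def qIntP (n : ℕ) : Polynomial ℤ := ∑ i ∈ Finset.range n, Polynomial.X ^ i

/-- The `q`-factorial `[n]_q!`. -/
noncomputable def qFact (n : ℕ) : Polynomial ℤ := ∏ i ∈ Finset.Icc 1 n, qIntP i

/-- The dual poset `P̄` : `x ≤_{P̄} y` iff `y ≤_P x`. -/
def dualP (m : ℕ) (P : PartialOrder (Fin m)) : PartialOrder (Fin m) where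
  le x y := P.le y x
  lt x y := P.lt y x
  le_refl x := P.le_refl x
  le_trans a b c h1 h2 := P.le_trans c b a h2 h1
  le_antisymm a b h1 h2 := P.le_antisymm a b h2 h1
  lt_iff_le_not_ge a b := P.lt_iff_le_not_ge b a

/-- The canonical ring map `ℤ[q] → ℚ(q)`. -/
noncomputable def toRF : Polynomial ℤ →+* RatFunc ℚ :=
  (algebraMap (Polynomial ℚ) (RatFunc ℚ)).comp (Polynomial.mapRingHom (Int.castRingHom ℚ))

/-- `W(n·O(P), q) = Σ_σ q^{|σ|}`, the sum being over all order-preserving maps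
`σ : P → {0,…,n}`. -/
noncomputable def Wpoly (m : ℕ) (P : PartialOrder (Fin m)) (n : ℕ) : Polynomial ℤ :=
  ∑ σ ∈ (Finset.univ.filter fun σ : Fin m → Fin (n + 1) =>
      ∀ x y : Fin m, P.le x y → σ x ≤ σ y),
    Polynomial.X ^ (∑ i : Fin m, (σ i : ℕ))

/-- The polynomial `q^{mj - s(s-1)/2} Π_{i=1}^{s-1} (x - [i]_q) Π_{i=1}^{m-s} (q^i x + [i]_q)`. -/
noncomputable def tSummand (m s mj : ℕ) : Polynomial (LaurentPolynomial ℤ) :=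
  Polynomial.C (T ((mj : ℤ) - (s * (s - 1) / 2 : ℕ))) *
    (∏ i ∈ Finset.Icc 1 (s - 1), (Polynomial.X - Polynomial.C (qInt (i : ℤ)))) *
    ∏ i ∈ Finset.Icc 1 (m - s),
      (Polynomial.C (T (i : ℤ)) * Polynomial.X + Polynomial.C (qInt (i : ℤ)))

/-- `t(π,k)`: the coefficient of `x^{k-1}` in
`q^{maj π - s(s-1)/2} Π_{i=1}^{s-1} (x - [i]_q) Π_{i=1}^{m-s} (q^i x + [i]_q)`,
where `s = des π`. -/
noncomputable def tpoly (m : ℕ) (π : Equiv.Perm (Fin m)) (k : ℕ) : LaurentPolynomial ℤ :=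
  (tSummand m (desNum m π) (majIdx m π)).coeff (k - 1)

/-- The polynomial `A(q,x) = Π_{i=1}^m (q^i x + [i]_q)`. -/
noncomputable def Apoly (m : ℕ) : Polynomial (LaurentPolynomial ℤ) :=
  ∏ i ∈ Finset.Icc 1 m,
    (Polynomial.C (T (i : ℤ)) * Polynomial.X + Polynomial.C (qInt (i : ℤ)))

/-- The polynomial `B(q,x) = x Σ_{π ∈ L(P), des π ≥ 1} q^{maj π - s(s-1)/2}
Π_{i=1}^{s-1} (x - [i]_q) Π_{i=1}^{m-s} (q^i x + [i]_q)`, where `s = des π`;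
one has `F_P(q,x) = A(q,x) + B(q,x)`. -/
noncomputable def Bpoly (m : ℕ) (P : PartialOrder (Fin m)) : Polynomial (LaurentPolynomial ℤ) :=
  Polynomial.X *
    ∑ π ∈ Finset.univ.filter (fun π => IsLinExt m P π ∧ 1 ≤ desNum m π),
      tSummand m (desNum m π) (majIdx m π)

/-! Writing each factor as `[e]_q + q^e x = q^e (x + q^{-e}[e]_q)`, the coefficient of `x^k` in
the summand of a linear extension with `s` descents is `q^{maj + Σ_i (i - s)}` times an elementary
symmetric function of the `q^{-e}[e]_q`, each of which has `q`-degree at most `max(-e, 0) - 1`.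
So its `q`-degree is at most `maj + k - m + Σ_i max(i - s, 0)`, and bounding `maj` by the sum of
the `s` largest integers below `m` turns this into `m(m-1)/2 + k - s`. Hence only the linear
extensions without descents reach the degree `m(m-1)/2 + k`, each with leading coefficient
`binom(m, k)`, and the identity is one of them because `P` is naturally labeled. -/

namespace LaurentPolynomial

section Degree

variable {R : Type*}

theorem degree_neg [Ring R] (f : R[T;T⁻¹]) : (-f).degree = f.degree :=
  AddMonoidAlgebra.supDegree_neg

theorem degree_sum_le [Semiring R] {ι : Type*} (s : Finset ι) (f : ι → R[T;T⁻¹]) :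
    (∑ i ∈ s, f i).degree ≤ s.sup fun i => (f i).degree :=
  AddMonoidAlgebra.supDegree_sum_le

theorem degree_mul_le [Semiring R] (f g : R[T;T⁻¹]) :
    (f * g).degree ≤ f.degree + g.degree :=
  AddMonoidAlgebra.supDegree_mul_le (fun _ _ => WithBot.coe_add ..)

theorem degree_prod_le [CommSemiring R] {ι : Type*} (s : Finset ι) (f : ι → R[T;T⁻¹]) :
    (∏ i ∈ s, f i).degree ≤ ∑ i ∈ s, (f i).degree :=
  AddMonoidAlgebra.supDegree_prod_le WithBot.coe_zero (fun _ _ => WithBot.coe_add ..)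

theorem coeff_eq_zero_of_degree_lt [Semiring R] {f : R[T;T⁻¹]} {n : ℤ} (h : f.degree < n) :
    f.coeff n = 0 :=
  AddMonoidAlgebra.coeff_eq_zero_of_not_le_supDegree h.not_ge

theorem coeff_mul_of_degree_le [Semiring R] {f g : R[T;T⁻¹]} {a b : ℤ}
    (hf : f.degree ≤ a) (hg : g.degree ≤ b) :
    (f * g).coeff (a + b) = f.coeff a * g.coeff b := by
  classical
  have le_of_mem {h : R[T;T⁻¹]} {c i : ℤ} (hh : h.degree ≤ c) (hi : i ∈ h.coeff.support) :
      i ≤ c :=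
    WithBot.coe_le_coe.mp ((Finset.le_max hi).trans hh)
  rw [AddMonoidAlgebra.coeff_mul, Finsupp.sum, Finset.sum_eq_single a]
  · rw [Finsupp.sum, Finset.sum_eq_single b]
    · exact if_pos rfl
    · exact fun j hj hjb => if_neg (by have := le_of_mem hg hj; omega)
    · intro hb
      rw [Finsupp.notMem_support_iff.mp hb, mul_zero, ite_self]
  · intro i hi hia
    refine Finset.sum_eq_zero fun j hj => if_neg ?_
    have := le_of_mem hf hi
    have := le_of_mem hg hj
    omega
  · intro ha
    exact Finset.sum_eq_zero fun j _ => by simp [Finsupp.notMem_support_iff.mp ha]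

theorem T_sum [CommSemiring R] {ι : Type*} (s : Finset ι) (e : ι → ℤ) :
    (T (∑ i ∈ s, e i) : R[T;T⁻¹]) = ∏ i ∈ s, T (e i) := by
  classical
  induction s using Finset.induction_on with
  | empty => simp [T_zero]
  | insert a s ha ih => rw [Finset.sum_insert ha, Finset.prod_insert ha, T_add, ih]

theorem coeff_prod_of_degree_le [CommSemiring R] {ι : Type*} (s : Finset ι)
    (f : ι → R[T;T⁻¹]) (d : ι → ℤ) (h : ∀ i ∈ s, (f i).degree ≤ d i) :
    (∏ i ∈ s, f i).coeff (∑ i ∈ s, d i) = ∏ i ∈ s, (f i).coeff (d i) := by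
  classical
  induction s using Finset.induction_on with
  | empty => simp [← T_zero]
  | insert a s ha ih =>
    have hs : (∏ i ∈ s, f i).degree ≤ ↑(∑ i ∈ s, d i) := by
      grw [degree_prod_le, Finset.sum_le_sum fun i hi => h i (Finset.mem_insert_of_mem hi)]
      simp
    rw [Finset.prod_insert ha, Finset.sum_insert ha, Finset.prod_insert ha,
      coeff_mul_of_degree_le (h a (Finset.mem_insert_self a s)) hs,
      ih fun _ hi => h _ (Finset.mem_insert_of_mem hi)]

theorem isGreatest_coeff_ne_zero [Semiring R] {f : R[T;T⁻¹]} {n : ℤ} (h : f.degree ≤ n)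
    (hn : f.coeff n ≠ 0) : IsGreatest {i | f.coeff i ≠ 0} n :=
  ⟨hn, fun _ hi =>
    WithBot.coe_le_coe.mp ((Finset.le_max (Finsupp.mem_support_iff.mpr hi)).trans h)⟩

end Degree

end LaurentPolynomial

noncomputable def qNorm (e : ℤ) : LaurentPolynomial ℤ := T (-e) * qInt e

theorem qNorm_of_nonneg {e : ℤ} (he : 0 ≤ e) :
    qNorm e = ∑ i ∈ range e.toNat, T ((i : ℤ) - e) := by
  simp only [qNorm, qInt, if_pos he, Finset.mul_sum, ← T_add, neg_add_eq_sub]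

theorem qNorm_of_neg {e : ℤ} (he : e < 0) :
    qNorm e = -∑ i ∈ range (-e).toNat, T (i : ℤ) := by
  rw [qNorm, qInt, if_neg he.not_ge, mul_neg, ← mul_assoc, ← T_add, neg_add_cancel, T_zero,
    one_mul]

theorem degree_qNorm_le (e : ℤ) : (qNorm e).degree ≤ ↑(max (-e) 0 - 1) := by
  rcases le_or_gt 0 e with he | he
  · rw [qNorm_of_nonneg he]
    refine (LaurentPolynomial.degree_sum_le _ _).trans <|
      Finset.sup_le fun i hi => (degree_T_le _).trans ?_
    have := Finset.mem_range.mp hi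
    exact WithBot.coe_le_coe.mpr (by omega)
  · rw [qNorm_of_neg he, LaurentPolynomial.degree_neg]
    refine (LaurentPolynomial.degree_sum_le _ _).trans <|
      Finset.sup_le fun i hi => (degree_T_le _).trans ?_
    have := Finset.mem_range.mp hi
    exact WithBot.coe_le_coe.mpr (by omega)

theorem coeff_qNorm_neg_one {e : ℤ} (he : 0 < e) : (qNorm e).coeff (-1) = 1 := by
  rw [qNorm_of_nonneg he.le, AddMonoidAlgebra.coeff_sum, Finsupp.finsetSum_apply,
    Finset.sum_eq_single (e.toNat - 1)]
  · rw [T_apply, if_pos (by omega)]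
  · exact fun i _ hi => by rw [T_apply, if_neg (by omega)]
  · exact fun h => absurd (Finset.mem_range.mpr (by omega)) h

theorem C_qInt_add_C_T_mul_X (e : ℤ) :
    (Polynomial.C (qInt e) + Polynomial.C (T e) * X : (LaurentPolynomial ℤ)[X]) =
      Polynomial.C (T e) * (X + Polynomial.C (qNorm e)) := by
  rw [mul_add, ← Polynomial.C_mul, qNorm, ← mul_assoc, ← T_add, add_neg_cancel, T_zero, one_mul,
    add_comm]

noncomputable def fSummand (m s mj : ℕ) : (LaurentPolynomial ℤ)[X] :=
  Polynomial.C (T (mj : ℤ)) *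
    ∏ i ∈ Icc 1 m, (Polynomial.C (qInt ((i : ℤ) - s)) + Polynomial.C (T ((i : ℤ) - s)) * X)

theorem Fpoly_eq_sum_fSummand (m : ℕ) (P : PartialOrder (Fin m)) :
    Fpoly m P = ∑ π with IsLinExt m P π, fSummand m (desNum m π) (majIdx m π) := rfl

theorem coeff_fSummand {m k : ℕ} (s mj : ℕ) (hk : k ≤ m) :
    (fSummand m s mj).coeff k = T ((mj : ℤ) + ∑ i ∈ Icc 1 m, ((i : ℤ) - s)) *
      ∑ t ∈ (Icc 1 m).powersetCard (m - k), ∏ i ∈ t, qNorm ((i : ℤ) - s) := by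
  simp only [fSummand, C_qInt_add_C_T_mul_X, Finset.prod_mul_distrib, ← map_prod,
    ← LaurentPolynomial.T_sum, ← mul_assoc, ← Polynomial.C_mul, ← T_add, Polynomial.coeff_C_mul]
  rw [Finset.prod_X_add_C_coeff _ _ (by simpa using hk), Nat.card_Icc, Nat.add_sub_cancel]

theorem degree_coeff_fSummand_le {m k : ℕ} (s mj : ℕ) (hk : k ≤ m) :
    ((fSummand m s mj).coeff k).degree ≤
      ↑((mj : ℤ) + k - m + ∑ i ∈ Icc 1 m, max ((i : ℤ) - s) 0) := by
  have hprod : ∀ t ∈ (Icc 1 m).powersetCard (m - k),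
      (∏ i ∈ t, qNorm ((i : ℤ) - s)).degree ≤
        ↑((k : ℤ) - m + ∑ i ∈ Icc 1 m, max ((s : ℤ) - i) 0) := by
    intro t ht
    obtain ⟨hsub, hcard⟩ := Finset.mem_powersetCard.mp ht
    refine (LaurentPolynomial.degree_prod_le _ _).trans <|
      (Finset.sum_le_sum fun i _ => degree_qNorm_le _).trans ?_
    rw [← WithBot.coe_sum, WithBot.coe_le_coe]
    have hle : ∑ i ∈ t, max ((s : ℤ) - i) 0 ≤ ∑ i ∈ Icc 1 m, max ((s : ℤ) - i) 0 :=
      Finset.sum_le_sum_of_subset_of_nonneg hsub fun _ _ _ => le_max_right _ _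
    simp only [neg_sub, Finset.sum_sub_distrib, Finset.sum_const, hcard, nsmul_one]
    omega
  rw [coeff_fSummand s mj hk]
  grw [LaurentPolynomial.degree_mul_le, degree_T_le, LaurentPolynomial.degree_sum_le,
    Finset.sup_le hprod, ← WithBot.coe_add]
  refine WithBot.coe_le_coe.mpr (le_of_eq ?_)
  have hmax : ∀ i ∈ Icc 1 m, ((i : ℤ) - s) + max ((s : ℤ) - i) 0 = max ((i : ℤ) - s) 0 :=
    fun i _ => by omega
  rw [← Finset.sum_congr rfl hmax, Finset.sum_add_distrib]
  ring

theorem Finset.two_mul_sum_add_card_mul_le {A : Finset ℕ} {n : ℕ} (h : ∀ a ∈ A, a < n) :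
    2 * ∑ a ∈ A, a + #A * (#A + 1) ≤ 2 * #A * n := by
  induction A using Finset.induction_on_max generalizing n with
  | empty => simp
  | insert a A hlt ih =>
    have ha : a ∉ A := fun h => (hlt a h).false
    have han := h a (Finset.mem_insert_self a A)
    have hA := ih hlt
    rw [Finset.sum_insert ha, Finset.card_insert_of_notMem ha]
    nlinarith

theorem two_mul_sum_Icc_max_sub {m s : ℕ} (hs : s ≤ m) :
    2 * ∑ i ∈ Icc 1 m, max ((i : ℤ) - s) 0 = (m - s) * (m - s + 1) := by
  induction m, hs using Nat.le_induction with
  | base =>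
    rw [Finset.sum_eq_zero fun i hi => by have := (Finset.mem_Icc.mp hi).2; omega]
    ring
  | succ m hsm ih =>
    rw [Finset.sum_Icc_succ_top (by omega), mul_add, ih, max_eq_left (by omega)]
    push_cast
    ring

theorem two_mul_cast_mul_pred_div_two (m : ℕ) :
    2 * ((m * (m - 1) / 2 : ℕ) : ℤ) = m * (m - 1) := by
  have h := Nat.mul_div_cancel' (Nat.even_mul_pred_self m).two_dvd
  rcases m with _ | m
  · simp
  · rw [← Nat.cast_ofNat, ← Nat.cast_mul, h]
    push_cast
    ring

theorem desNum_le (m : ℕ) (π : Equiv.Perm (Fin m)) : desNum m π ≤ m :=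
  (Finset.card_filter_le _ _).trans (by simp)

theorem two_mul_majIdx_add_le (m : ℕ) (π : Equiv.Perm (Fin m)) :
    2 * majIdx m π + desNum m π * (desNum m π + 1) ≤ 2 * desNum m π * m :=
  Finset.two_mul_sum_add_card_mul_le fun _ ha => (Finset.mem_Ico.mp (Finset.mem_filter.mp ha).1).2

theorem majIdx_eq_zero_of_desNum_eq_zero {m : ℕ} {π : Equiv.Perm (Fin m)} (h : desNum m π = 0) :
    majIdx m π = 0 := by
  rw [majIdx, Finset.card_eq_zero.mp h, Finset.sum_empty]

theorem desNum_one (m : ℕ) : desNum m 1 = 0 := by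
  refine Finset.card_eq_zero.mpr (Finset.filter_eq_empty_iff.mpr fun i hi => ?_)
  have := Finset.mem_Ico.mp hi
  simp only [wordAt, Equiv.Perm.one_apply, dif_pos (show i + 1 - 1 < m by omega),
    dif_pos (show i - 1 < m by omega)]
  omega

theorem isLinExt_one {m : ℕ} {P : PartialOrder (Fin m)} (hP : NatLabeled m P) :
    IsLinExt m P 1 :=
  fun i j => hP i j

theorem degree_coeff_fSummand_le_top {m k : ℕ} (hk : k ≤ m) (π : Equiv.Perm (Fin m)) :
    ((fSummand m (desNum m π) (majIdx m π)).coeff k).degree ≤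
      ↑(((m * (m - 1) / 2 + k : ℕ) : ℤ) - desNum m π) := by
  refine (degree_coeff_fSummand_le _ _ hk).trans (WithBot.coe_le_coe.mpr ?_)
  have hmaj := two_mul_majIdx_add_le m π
  have hsum := two_mul_sum_Icc_max_sub (desNum_le m π)
  have htop := two_mul_cast_mul_pred_div_two m
  zify at hmaj
  rw [Nat.cast_add]
  nlinarith

theorem coeff_coeff_fSummand_zero {m k : ℕ} (hk : k ≤ m) :
    ((fSummand m 0 0).coeff k).coeff ((m * (m - 1) / 2 + k : ℕ) : ℤ) = m.choose k := by
  have hexp : ((m * (m - 1) / 2 + k : ℕ) : ℤ) = (k : ℤ) - m + ∑ i ∈ Icc 1 m, (i : ℤ) := by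
    have hsum := two_mul_sum_Icc_max_sub (Nat.zero_le m)
    have htop := two_mul_cast_mul_pred_div_two m
    simp only [Nat.cast_zero, sub_zero, max_eq_left (Nat.cast_nonneg _)] at hsum
    rw [Nat.cast_add]
    linarith
  rw [hexp, coeff_fSummand 0 0 hk]
  simp only [Nat.cast_zero, sub_zero, zero_add]
  set S := (Icc 1 m).powersetCard (m - k)
  have hpos : ∀ t ∈ S, ∀ i ∈ t, (0 : ℤ) < i := fun t ht i hi => by
    have := Finset.mem_Icc.mp ((Finset.mem_powersetCard.mp ht).1 hi)
    omega
  have hdeg : ∀ t ∈ S, ∀ i ∈ t, (qNorm i).degree ≤ ↑(-1 : ℤ) := fun t ht i hi =>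
    (degree_qNorm_le _).trans (WithBot.coe_le_coe.mpr (by have := hpos t ht i hi; omega))
  have hcard : ∀ t ∈ S, ∑ _i ∈ t, (-1 : ℤ) = (k : ℤ) - m := by
    intro t ht
    rw [Finset.sum_const, (Finset.mem_powersetCard.mp ht).2, nsmul_eq_mul, mul_neg_one]
    omega
  have hsum : (∑ t ∈ S, ∏ i ∈ t, qNorm i).degree ≤ ↑((k : ℤ) - m) :=
    (LaurentPolynomial.degree_sum_le _ _).trans <| Finset.sup_le fun t ht =>
      (LaurentPolynomial.degree_prod_le _ _).trans <| (Finset.sum_le_sum (hdeg t ht)).trans <| by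
        rw [← WithBot.coe_sum, hcard t ht]
  have hterm : ∀ t ∈ S, (∏ i ∈ t, qNorm i).coeff ((k : ℤ) - m) = 1 := by
    intro t ht
    rw [← hcard t ht, LaurentPolynomial.coeff_prod_of_degree_le t _ _ (hdeg t ht)]
    exact Finset.prod_eq_one fun i hi => coeff_qNorm_neg_one (hpos t ht i hi)
  rw [add_comm, LaurentPolynomial.coeff_mul_of_degree_le (degree_T_le _) hsum,
    AddMonoidAlgebra.coeff_sum, Finsupp.finsetSum_apply, Finset.sum_congr rfl hterm]
  simp [S, Nat.choose_symm hk]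

theorem statement13_general (m : ℕ) (P : PartialOrder (Fin m))
    (hnat : NatLabeled m P)
    (k : ℕ) (hk2 : k ≤ m) :
    (Fpoly m P).coeff k ≠ 0 ∧
    IsGreatest {i : ℤ | ((Fpoly m P).coeff k).coeff i ≠ 0} ((m * (m - 1) / 2 + k : ℕ) : ℤ) := by
  set top : ℤ := ((m * (m - 1) / 2 + k : ℕ) : ℤ)
  have hcoeff_top (π : Equiv.Perm (Fin m)) :
      ((fSummand m (desNum m π) (majIdx m π)).coeff k).coeff top =
        if desNum m π = 0 then (m.choose k : ℤ) else 0 := by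
    split_ifs with hs
    · rw [majIdx_eq_zero_of_desNum_eq_zero hs, hs, coeff_coeff_fSummand_zero hk2]
    · exact LaurentPolynomial.coeff_eq_zero_of_degree_lt
        ((degree_coeff_fSummand_le_top hk2 π).trans_lt (WithBot.coe_lt_coe.mpr (by omega)))
  have hcoeff : ((Fpoly m P).coeff k).coeff top =
      #{π | IsLinExt m P π ∧ desNum m π = 0} * m.choose k := by
    rw [Fpoly_eq_sum_fSummand, Polynomial.finsetSum_coeff, AddMonoidAlgebra.coeff_sum,
      Finsupp.finsetSum_apply, Finset.sum_congr rfl fun π _ => hcoeff_top π, ← Finset.sum_filter,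
      Finset.filter_filter]
    simp
  have hne : ((Fpoly m P).coeff k).coeff top ≠ 0 := by
    have : 0 < #{π | IsLinExt m P π ∧ desNum m π = 0} :=
      Finset.card_pos.mpr ⟨1, by simp [isLinExt_one hnat, desNum_one]⟩
    have := Nat.choose_pos hk2
    rw [hcoeff]
    positivity
  have hle : ((Fpoly m P).coeff k).degree ≤ top := by
    rw [Fpoly_eq_sum_fSummand, Polynomial.finsetSum_coeff]
    exact (LaurentPolynomial.degree_sum_le _ _).trans <| Finset.sup_le fun π _ =>
      (degree_coeff_fSummand_le_top hk2 π).trans (WithBot.coe_le_coe.mpr (by omega))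
  exact ⟨fun h => hne (by rw [h]; rfl), LaurentPolynomial.isGreatest_coeff_ne_zero hle hne⟩

theorem statement13 (m : ℕ) (hm : 1 ≤ m) (P : PartialOrder (Fin m))
    (hnat : NatLabeled m P)
    (k : ℕ) (hk1 : 1 ≤ k) (hk2 : k ≤ m) :
    (Fpoly m P).coeff k ≠ 0 ∧
    IsGreatest {i : ℤ | ((Fpoly m P).coeff k).coeff i ≠ 0} ((m * (m - 1) / 2 + k : ℕ) : ℤ) :=
  statement13_general m P hnat k hk2
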